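/- Let Γ be a group admitting a surjective group homomorphism onto a non-abelian free group, i.e. onto FreeGroup ι for some type ι having at least two distinct elements. Then for every finite group A there exists a subgroup M of Γ of finite index such that N_Γ(M)/M is isomorphic to A. -/

import Mathlib

/-!
Through the free quotient, `Γ` can act on `X = ZMod m × A` by any two permutations; take the
shift `s : (i, b) ↦ (i + 1, b)` and the twist `t : (i, b) ↦ (i, b * c i)`, where `c` is onto `A`
and `c (i - 1) = c i` only for `i = 0`. Both commute with left multiplication by `A`, a free
action, so the stabilizer `M` of `x₀ = (0, 1)` fixes the whole fibre `A • x₀`. Conversely the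
commutator `⁅t, s⁆ ∈ M` fixes no point outside that fibre, so `N(M)` consists of the `γ` with
`γ • x₀ = a • x₀` for some `a`, and `γ ↦ a` identifies `N(M)/M` with `A` (up to `ᵐᵒᵖ`); it is
onto because `s⁻ᵏ t sᵏ` carries `x₀` to `c k • x₀`.
-/

open Equiv MulAction Subgroup
open scoped commutatorElement

section NormalizerOfStabilizer

variable {G H X : Type*} [Group G] [Group H] [MulAction G X] [MulAction H X] {x : X}

theorem mem_normalizer_stabilizer_iff {g : G} :
    g ∈ normalizer (stabilizer G x : Set G) ↔ stabilizer G (g • x) = stabilizer G x := by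
  rw [mem_normalizer_iff_map_conj_eq, stabilizer_smul_eq_stabilizer_map_conj]
  rfl

variable [SMulCommClass G H X]

theorem mem_normalizer_stabilizer_iff_exists_smul_eq
    (hfix : ∀ y : X, (∀ g ∈ stabilizer G x, g • y = y) → ∃ h : H, h • x = y) {g : G} :
    g ∈ normalizer (stabilizer G x : Set G) ↔ ∃ h : H, g • x = h • x := by
  rw [mem_normalizer_stabilizer_iff]
  constructor
  · intro hg
    obtain ⟨h, hh⟩ := hfix (g • x) fun k hk => by rwa [← hg] at hk
    exact ⟨h, hh.symm⟩
  · rintro ⟨h, hh⟩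
    rw [hh, stabilizer_smul_eq_right]

theorem nonempty_normalizer_stabilizer_quotient_mulEquiv_op
    (hfree : Function.Injective (· • x : H → X))
    (htrans : ∀ h : H, ∃ g : G, g • x = h • x)
    (hfix : ∀ y : X, (∀ g ∈ stabilizer G x, g • y = y) → ∃ h : H, h • x = y) :
    Nonempty (normalizer (stabilizer G x : Set G) ⧸
      (stabilizer G x).subgroupOf (normalizer (stabilizer G x : Set G)) ≃* Hᵐᵒᵖ) := by
  set N := normalizer (stabilizer G x : Set G)
  choose θ hθ using fun g : N => (mem_normalizer_stabilizer_iff_exists_smul_eq hfix).mp g.2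
  have hθ_eq {g : N} {h : H} (hg : (g : G) • x = h • x) : θ g = h := hfree ((hθ g).symm.trans hg)
  -- `(g * k) • x = θ k • θ g • x`, since the two actions commute
  let Θ : N →* Hᵐᵒᵖ :=
    { toFun g := MulOpposite.op (θ g)
      map_one' := congrArg MulOpposite.op <| hθ_eq <| by
        rw [OneMemClass.coe_one, one_smul, one_smul]
      map_mul' g k := by
        rw [← MulOpposite.op_mul, hθ_eq (h := θ k * θ g)]
        rw [Subgroup.coe_mul, mul_smul, hθ k, smul_comm, hθ g, mul_smul] }
  have hker : (stabilizer G x).subgroupOf N = Θ.ker := by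
    ext g
    rw [mem_subgroupOf, mem_stabilizer_iff, MonoidHom.mem_ker]
    change _ ↔ MulOpposite.op (θ g) = 1
    rw [MulOpposite.op_eq_one_iff, hθ g, ← hfree.eq_iff, one_smul]
  have hsurj : Function.Surjective Θ := fun h => by
    obtain ⟨g, hg⟩ := htrans h.unop
    exact ⟨⟨g, (mem_normalizer_stabilizer_iff_exists_smul_eq hfix).mpr ⟨_, hg⟩⟩,
      congrArg MulOpposite.op (hθ_eq hg)⟩
  exact ⟨(QuotientGroup.quotientMulEquivOfEq hker).trans
    (QuotientGroup.quotientKerEquivOfSurjective Θ hsurj)⟩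

theorem exists_index_ne_zero_normalizer_quotient_mulEquiv [Finite X]
    (hfree : Function.Injective (· • x : H → X))
    (htrans : ∀ h : H, ∃ g : G, g • x = h • x)
    (hfix : ∀ y : X, (∀ g ∈ stabilizer G x, g • y = y) → ∃ h : H, h • x = y) :
    ∃ M : Subgroup G, M.index ≠ 0 ∧
      Nonempty (normalizer (M : Set G) ⧸ M.subgroupOf (normalizer (M : Set G)) ≃* H) := by
  obtain ⟨e⟩ := nonempty_normalizer_stabilizer_quotient_mulEquiv_op hfree htrans hfix
  refine ⟨stabilizer G x, ?_, ⟨e.trans (MulEquiv.inv' H).symm⟩⟩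
  rw [index_stabilizer]
  exact Set.ncard_ne_zero_of_mem (mem_orbit_self x)

end NormalizerOfStabilizer

theorem exists_surjective_zmod_apply_sub_one_eq_iff (A : Type*) [Finite A] [Nontrivial A] :
    ∃ (m : ℕ) (_ : NeZero m) (c : ZMod m → A),
      Function.Surjective c ∧ ∀ i, c (i - 1) = c i ↔ i = 0 := by
  obtain ⟨n, ⟨e⟩⟩ := Finite.exists_equiv_fin A
  have hn : 2 ≤ n := by
    have := Finite.one_lt_card (α := A)
    rwa [Nat.card_congr e, Nat.card_eq_fintype_card, Fintype.card_fin] at this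
  refine ⟨n + 1, inferInstance, fun i => e.symm ⟨i.val % n, Nat.mod_lt _ (by omega)⟩, ?_, ?_⟩
  · intro a
    refine ⟨(e a : ℕ), ?_⟩
    have : ((e a : ℕ) : ZMod (n + 1)).val = e a := ZMod.val_cast_of_lt (by omega)
    simp only [this, Nat.mod_eq_of_lt (e a).isLt, Fin.eta, Equiv.symm_apply_apply]
  · intro i
    simp only [e.symm.apply_eq_iff_eq, Fin.mk.injEq]
    rcases eq_or_ne i 0 with rfl | hi
    · simp [ZMod.val_neg_one]
    · have hpos : 0 < i.val := Nat.pos_of_ne_zero ((ZMod.val_ne_zero i).mpr hi)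
      have hsub : (i - 1).val = i.val - 1 := by
        have h1 : (1 : ZMod (n + 1)).val = 1 := ZMod.val_one'' (by omega)
        rw [ZMod.val_sub (by omega), h1]
      have hlt := ZMod.val_lt i
      rw [hsub, Nat.mod_eq_of_lt (by omega)]
      simp only [hi, iff_false]
      rcases Nat.lt_or_ge i.val n with h | h
      · rw [Nat.mod_eq_of_lt h]; omega
      · rw [show i.val = n by omega, Nat.mod_self]; omega

namespace Farp

variable {m : ℕ} {A : Type*}

variable (m A) in
def shift : Perm (ZMod m × A) := prodCongr (Equiv.addRight 1) (Equiv.refl A)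

@[simp] lemma shift_apply (x : ZMod m × A) : shift m A x = (x.1 + 1, x.2) := rfl

@[simp] lemma shift_inv_apply (x : ZMod m × A) : (shift m A)⁻¹ x = (x.1 - 1, x.2) := by
  rw [Perm.inv_eq_iff_eq]; simp

@[simp] lemma shift_pow_apply (k : ℕ) (x : ZMod m × A) : (shift m A ^ k) x = (x.1 + k, x.2) := by
  induction k with
  | zero => simp
  | succ k ih => rw [pow_succ', Perm.mul_apply, ih, shift_apply, Nat.cast_succ, add_assoc]

variable [Group A]

def twist (c : ZMod m → A) : Perm (ZMod m × A) :=
  prodShear (Equiv.refl _) fun i => Equiv.mulRight (c i)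

@[simp] lemma twist_apply (c : ZMod m → A) (x : ZMod m × A) : twist c x = (x.1, x.2 * c x.1) := rfl

@[simp] lemma twist_inv_apply (c : ZMod m → A) (x : ZMod m × A) :
    (twist c)⁻¹ x = (x.1, x.2 * (c x.1)⁻¹) := by
  rw [Perm.inv_eq_iff_eq]; simp

lemma conj_twist_apply (c : ZMod m → A) (k : ℕ) (x : ZMod m × A) :
    ((shift m A ^ k)⁻¹ * twist c * shift m A ^ k) x = (x.1, x.2 * c (x.1 + k)) := by
  rw [Perm.mul_apply, Perm.mul_apply, Perm.inv_eq_iff_eq]; simp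

lemma commutator_twist_shift_apply_eq_self_iff {c : ZMod m → A}
    (hc : ∀ i, c (i - 1) = c i ↔ i = 0) (x : ZMod m × A) :
    ⁅twist c, shift m A⁆ x = x ↔ x.1 = 0 := by
  simp [commutatorElement_def, Perm.mul_apply, mul_assoc, Prod.ext_iff, inv_mul_eq_one, hc]

local instance fiberMulAction : MulAction A (ZMod m × A) where
  smul a x := (x.1, a * x.2)
  one_smul x := by simp [HSMul.hSMul]
  mul_smul a b x := by simp [HSMul.hSMul, mul_assoc]

lemma smul_def (a : A) (x : ZMod m × A) : a • x = (x.1, a * x.2) := rfl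

lemma mem_centralizer_range_toPerm_iff {σ : Perm (ZMod m × A)} :
    σ ∈ centralizer (Set.range (toPerm : A → Perm (ZMod m × A))) ↔
      ∀ (a : A) (x : ZMod m × A), σ (a • x) = a • σ x := by
  simp only [mem_centralizer_iff, Set.forall_mem_range, Perm.ext_iff, Perm.mul_apply,
    toPerm_apply]
  exact forall_congr' fun a => forall_congr' fun x => eq_comm

lemma closure_shift_twist_le_centralizer (c : ZMod m → A) :
    closure {shift m A, twist c} ≤ centralizer (Set.range (toPerm : A → Perm (ZMod m × A))) := by
  refine closure_le _ |>.mpr <| Set.insert_subset_iff.mpr ⟨?_, Set.singleton_subset_iff.mpr ?_⟩ <;>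
    refine mem_centralizer_range_toPerm_iff.mpr fun a x => ?_ <;> simp [smul_def, mul_assoc]

theorem exists_index_ne_zero_normalizer_quotient_mulEquiv_of_range_eq_closure
    [Finite A] [NeZero m] {c : ZMod m → A}
    (hsurj : Function.Surjective c) (hc : ∀ i, c (i - 1) = c i ↔ i = 0)
    {Γ : Type*} [Group Γ] (ψ : Γ →* Perm (ZMod m × A))
    (hψ : ψ.range = closure {shift m A, twist c}) :
    ∃ M : Subgroup Γ, M.index ≠ 0 ∧
      Nonempty (normalizer (M : Set Γ) ⧸ M.subgroupOf (normalizer (M : Set Γ)) ≃* A) := by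
  let _ : MulAction Γ (ZMod m × A) := compHom _ ψ
  have hlift {σ} (hσ : σ ∈ closure {shift m A, twist c}) : ∃ γ : Γ, ∀ x, γ • x = σ x := by
    rw [← hψ] at hσ
    obtain ⟨γ, rfl⟩ := hσ
    exact ⟨γ, fun _ => rfl⟩
  have : SMulCommClass Γ A (ZMod m × A) := ⟨fun γ => mem_centralizer_range_toPerm_iff.mp <|
    closure_shift_twist_le_centralizer c (hψ ▸ ⟨γ, rfl⟩)⟩
  have hshift : shift m A ∈ closure {shift m A, twist c} := subset_closure (by simp)
  have htwist : twist c ∈ closure {shift m A, twist c} := subset_closure (by simp)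
  refine exists_index_ne_zero_normalizer_quotient_mulEquiv (x := ((0, 1) : ZMod m × A))
    (fun a b h => by simpa [smul_def] using h) (fun a => ?_) (fun y hy => ?_)
  · obtain ⟨i, rfl⟩ := hsurj a
    obtain ⟨γ, hγ⟩ := hlift (mul_mem (mul_mem (inv_mem (pow_mem hshift i.val)) htwist)
      (pow_mem hshift i.val))
    refine ⟨γ, ?_⟩
    rw [hγ, conj_twist_apply, smul_def]
    simp
  · obtain ⟨γ, hγ⟩ := hlift (σ := ⁅twist c, shift m A⁆) <| by
      rw [commutatorElement_def]
      exact mul_mem (mul_mem (mul_mem htwist hshift) (inv_mem htwist)) (inv_mem hshift)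
    have hy0 : y.1 = 0 := by
      rw [← commutator_twist_shift_apply_eq_self_iff hc, ← hγ]
      refine hy γ ?_
      rw [mem_stabilizer_iff, hγ, commutator_twist_shift_apply_eq_self_iff hc]
    exact ⟨y.2, by rw [smul_def, ← hy0, mul_one]⟩

end Farp

/-- A group with an epimorphism onto a non-abelian free group has the finite
automorphism realisation property. -/
theorem farp_of_free_quotient
    {Γ : Type*} [Group Γ] {ι : Type*} (a b : ι) (hab : a ≠ b)
    (φ : Γ →* FreeGroup ι) (hφ : Function.Surjective φ) :
    ∀ (A : Type*) [Group A] [Finite A], ∃ M : Subgroup Γ, M.index ≠ 0 ∧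
      Nonempty ((Subgroup.normalizer (M : Set Γ) ⧸ M.subgroupOf (Subgroup.normalizer (M : Set Γ))) ≃* A) := by
  intro A _ _
  rcases subsingleton_or_nontrivial A with _ | _
  · exact exists_index_ne_zero_normalizer_quotient_mulEquiv (G := Γ) (x := Unit.unit)
      (fun _ _ _ => Subsingleton.elim _ _) (fun _ => ⟨1, rfl⟩) (fun _ _ => ⟨1, rfl⟩)
  classical
  obtain ⟨m, _, c, hsurj, hc⟩ := exists_surjective_zmod_apply_sub_one_eq_iff A
  refine Farp.exists_index_ne_zero_normalizer_quotient_mulEquiv_of_range_eq_closure hsurj hc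
    ((FreeGroup.lift fun i => if i = a then Farp.shift m A else Farp.twist c).comp φ) ?_
  rw [MonoidHom.range_comp, φ.range_eq_top_of_surjective hφ, ← MonoidHom.range_eq_map,
    FreeGroup.range_lift_eq_closure, Set.range_ite_const (p := (· = a)) ⟨a, rfl⟩ ⟨b, hab.symm⟩]
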